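/- Let 0<α<1, t(x) = c(α)x^{2α−1}e^{−x}·1_{x≥0} be the density of the Gamma(2α) distribution, t_θ(x) = t(x−θ) for θ∈Θ=[−1,1], and assume there exist 0<a̲≤ā with a̲|θ−θ′|^α ≤ h(t_θ,t_θ′) ≤ ā|θ−θ′|^α for all θ,θ′∈Θ. Let δ>0 and let π be the image, by θ↦𝐭_θ=(t_θ,…,t_θ), of the probability ν on ℝ with density g(z) = c_δ^{−1}·exp[−1/(2|z|^δ)]·1_{[−1,1]}(z) with respect to Lebesgue measure (c_δ the normalizing constant). Then η^{S̄,π}(𝐭₀) ≤ K·n^{δ/[2(2α+δ)]} for some constant K depending only on α, δ and γ (and a̲,ā). -/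

import Mathlib

set_option maxHeartbeats 1000000


open MeasureTheory Real Set Filter
open scoped Classical ENNReal

noncomputable section

/-- Squared Hellinger distance `h²(p·ν, q·ν) = (1/2)∫(√p−√q)² dν`. -/
def hellSq {X : Type*} [MeasurableSpace X] (ν : Measure X) (p q : X → ℝ) : ℝ :=
  (1 / 2) * ∫ x, (Real.sqrt (p x) - Real.sqrt (q x)) ^ 2 ∂ν

/-- Hellinger distance between two densities w.r.t. `ν`. -/
def hD {X : Type*} [MeasurableSpace X] (ν : Measure X) (p q : X → ℝ) : ℝ :=
  Real.sqrt (hellSq ν p q)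

/-- Hellinger-type distance `𝐡` between `n`-tuples of densities. -/
def bH {n : ℕ} {𝒳 : Fin n → Type*} [∀ i, MeasurableSpace (𝒳 i)]
    (μ : ∀ i, Measure (𝒳 i)) (t t' : ∀ i, 𝒳 i → ℝ) : ℝ :=
  Real.sqrt (∑ i, hellSq (μ i) (t i) (t' i))

/-- `η^{S̄,π}(𝐭) = inf{r ≥ 0 : π(B^{S̄}(𝐭,2r′)) ≤ exp(γr′²)·π(B^{S̄}(𝐭,r′)) for all r′ ≥ r}`. -/
def etaS {n : ℕ} {𝒳 : Fin n → Type*} [∀ i, MeasurableSpace (𝒳 i)]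
    (μ : ∀ i, Measure (𝒳 i)) (Sbar : Set (∀ i, 𝒳 i → ℝ))
    {mS : MeasurableSpace (∀ i, 𝒳 i → ℝ)} (pr : Measure (∀ i, 𝒳 i → ℝ))
    (γ : ℝ) (t : ∀ i, 𝒳 i → ℝ) : ℝ :=
  sInf {r : ℝ | 0 ≤ r ∧ ∀ r' ≥ r,
    pr {u ∈ Sbar | bH μ t u ≤ 2 * r'} ≤
      ENNReal.ofReal (Real.exp (γ * r' ^ 2)) * pr {u ∈ Sbar | bH μ t u ≤ r'}}

/-- The density of the Gamma(2α) distribution: `t(x) = c(α) x^{2α−1} e^{−x} 1_{x≥0}`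
with `c(α) = 1/Γ(2α)`. -/
def tgam (α : ℝ) (x : ℝ) : ℝ :=
  if 0 ≤ x then x ^ (2 * α - 1) * Real.exp (-x) / Real.Gamma (2 * α) else 0

/-- The translated density `t_θ(x) = t(x−θ)`. -/
def tθgam (α θ : ℝ) : ℝ → ℝ := fun x => tgam α (x - θ)

/-- Unnormalized prior density `exp[−(2|z|^δ)⁻¹] 1_{[−1,1]}(z)`. -/
def gprior (δ z : ℝ) : ℝ :=
  if z ∈ Icc (-1 : ℝ) 1 then Real.exp (-(1 / (2 * |z| ^ δ))) else 0

/-- The normalizing constant `c_δ`. -/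
def cprior (δ : ℝ) : ℝ := ∫ z, gprior δ z

/-- The model of iid `n`-tuples `𝐭_θ = (t_θ,…,t_θ)`. -/
def tparam (α : ℝ) (n : ℕ) : ℝ → Fin n → ℝ → ℝ := fun θ _ => tθgam α θ


lemma gprior_nonneg (δ z : ℝ) : 0 ≤ gprior δ z := by
  unfold gprior; split_ifs
  · positivity
  · exact le_rfl

lemma gprior_meas (δ : ℝ) : Measurable (gprior δ) := by
  unfold gprior
  apply Measurable.ite measurableSet_Icc _ measurable_const
  fun_prop

lemma gprior_integrable (δ : ℝ) : Integrable (gprior δ) := by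
  apply Integrable.mono' (g := Set.indicator (Icc (-1:ℝ) 1) (fun _ => (1:ℝ)))
  · exact (integrable_indicator_iff measurableSet_Icc).2
      (integrableOn_const (by rw [Real.volume_Icc]; exact ENNReal.ofReal_ne_top))
  · exact (gprior_meas δ).aestronglyMeasurable
  · refine Eventually.of_forall fun z => ?_
    rw [Real.norm_eq_abs, abs_of_nonneg (gprior_nonneg δ z)]
    unfold gprior
    by_cases h : z ∈ Icc (-1:ℝ) 1
    · rw [if_pos h, Set.indicator_of_mem h]
      calc Real.exp (-(1 / (2 * |z| ^ δ))) ≤ Real.exp 0 :=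
            Real.exp_le_exp.2 (by simp only [neg_nonpos]; positivity)
        _ = 1 := Real.exp_zero
    · rw [if_neg h, Set.indicator_of_notMem h]

lemma gprior_lb {δ : ℝ} (hδ : 0 < δ) {a : ℝ} (ha0 : 0 < a) (ha1 : a ≤ 1)
    {z : ℝ} (hz : z ∈ Icc (a/2) a) :
    Real.exp (-((2:ℝ) ^ (δ - 1) / a ^ δ)) ≤ gprior δ z := by
  obtain ⟨hz1, hz2⟩ := hz
  have hz0 : 0 < z := lt_of_lt_of_le (by linarith) hz1
  have hzI : z ∈ Icc (-1:ℝ) 1 := ⟨by linarith, le_trans hz2 ha1⟩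
  unfold gprior
  rw [if_pos hzI]
  apply Real.exp_le_exp.2
  rw [neg_le_neg_iff]
  rw [abs_of_nonneg hz0.le]
  have h2 : (2:ℝ) ^ (δ - 1) = 2 ^ δ / 2 := by
    rw [Real.rpow_sub two_pos, Real.rpow_one]
  rw [h2]
  rw [div_le_div_iff₀ (by positivity) (by positivity)]
  have key : a ^ δ ≤ (2*z) ^ δ := Real.rpow_le_rpow ha0.le (by linarith) hδ.le
  rw [Real.mul_rpow (by norm_num) hz0.le] at key
  calc (1:ℝ) * a ^ δ = a ^ δ := one_mul _
    _ ≤ 2 ^ δ * z ^ δ := key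
    _ = 2 ^ δ / 2 * (2 * z ^ δ) := by ring

lemma gprior_setIntegral_lb {δ : ℝ} (hδ : 0 < δ) {a : ℝ} (ha0 : 0 < a) (ha1 : a ≤ 1) :
    a / 2 * Real.exp (-((2:ℝ) ^ (δ - 1) / a ^ δ)) ≤ ∫ z in Icc (a/2) a, gprior δ z := by
  have := MeasureTheory.setIntegral_mono_on
    (f := fun _ : ℝ => Real.exp (-((2:ℝ) ^ (δ - 1) / a ^ δ)))
    (g := gprior δ) (s := Icc (a/2) a) (μ := volume)
    (integrableOn_const (by rw [Real.volume_Icc]; exact ENNReal.ofReal_ne_top))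
    ((gprior_integrable δ).integrableOn) measurableSet_Icc
    (fun z hz => gprior_lb hδ ha0 ha1 hz)
  rw [MeasureTheory.setIntegral_const, Real.volume_real_Icc_of_le (by linarith)] at this
  calc a / 2 * Real.exp (-((2:ℝ) ^ (δ - 1) / a ^ δ))
      = (a - a/2) • Real.exp (-((2:ℝ) ^ (δ - 1) / a ^ δ)) := by
        rw [smul_eq_mul]; ring_nf
    _ ≤ _ := this

lemma cprior_pos {δ : ℝ} (hδ : 0 < δ) : 0 < cprior δ := by
  have h1 : ∫ z in Icc ((1:ℝ)/2) 1, gprior δ z ≤ ∫ z, gprior δ z :=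
    setIntegral_le_integral (gprior_integrable δ) (Eventually.of_forall (gprior_nonneg δ))
  have h2 := gprior_setIntegral_lb hδ one_pos le_rfl
  have h3 : (0:ℝ) < 1 / 2 * Real.exp (-((2:ℝ) ^ (δ - 1) / (1:ℝ) ^ δ)) := by positivity
  unfold cprior
  linarith

lemma hellSq_nonneg {X : Type*} [MeasurableSpace X] (ν : Measure X) (p q : X → ℝ) :
    0 ≤ hellSq ν p q := by
  unfold hellSq
  have : 0 ≤ ∫ x, (Real.sqrt (p x) - Real.sqrt (q x)) ^ 2 ∂ν :=
    integral_nonneg fun x => sq_nonneg _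
  linarith

lemma bH_const (n : ℕ) (t t' : ℝ → ℝ) :
    bH (fun _ : Fin n => (volume : Measure ℝ)) (fun _ => t) (fun _ => t')
      = Real.sqrt n * hD volume t t' := by
  unfold bH hD
  rw [Finset.sum_const, Finset.card_univ, Fintype.card_fin, nsmul_eq_mul,
    Real.sqrt_mul (Nat.cast_nonneg n)]

theorem statement_12
    (α : ℝ) (hα0 : 0 < α) (hα1 : α < 1)
    (δ : ℝ) (hδ : 0 < δ)
    (β : ℝ) (hβ : 0 < β)
    -- the model satisfies the Hellinger/Euclidean comparison with exponent α
    (al ab : ℝ) (hal : 0 < al) (hab : al ≤ ab)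
    (hcomp : ∀ θ ∈ Icc (-1 : ℝ) 1, ∀ θ' ∈ Icc (-1 : ℝ) 1,
      al * |θ - θ'| ^ α ≤ hD MeasureTheory.volume (tθgam α θ) (tθgam α θ') ∧
      hD MeasureTheory.volume (tθgam α θ) (tθgam α θ') ≤ ab * |θ - θ'| ^ α)
    -- the prior ν on Θ = [−1,1] with density c_δ⁻¹ exp[−(2|z|^δ)⁻¹] 1_{[−1,1]}
    (ν : Measure ℝ)
    (hν : ν = MeasureTheory.volume.withDensity fun z =>
      ENNReal.ofReal (gprior δ z / cprior δ))
    (mS : ∀ n : ℕ, MeasurableSpace (Fin n → ℝ → ℝ))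
    (hmeas : ∀ n : ℕ, @Measurable ℝ (Fin n → ℝ → ℝ) _ (mS n) (tparam α n)) :
    -- η^{S̄,π}(𝐭₀) ≤ K n^{δ/[2(2α+δ)]} for a constant K = K(α,δ,γ,a̲,ā)
    ∃ K : ℝ, 0 < K ∧ ∀ n : ℕ, 0 < n →
      @etaS n (fun _ => ℝ) _ (fun _ => MeasureTheory.volume)
          (tparam α n '' Icc (-1 : ℝ) 1) (mS n)
          (@Measure.map ℝ (Fin n → ℝ → ℝ) _ (mS n) (tparam α n) ν)
          (β / 8) (tparam α n 0) ≤
        K * (n : ℝ) ^ (δ / (2 * (2 * α + δ))) := by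
  classical
  have hγ : 0 < β / 8 := by linarith
  set γ := β / 8 with hγdef
  clear_value γ
  have hab0 : 0 < ab := lt_of_lt_of_le hal hab
  set c := cprior δ with hcdef
  have hc : 0 < c := by rw [hcdef]; exact cprior_pos hδ
  have hcint : ∫ z, gprior δ z = c := by rw [hcdef]; rfl
  clear_value c
  have h2pow : (0:ℝ) < 2 ^ (δ - 1) := Real.rpow_pos_of_pos two_pos _
  set B : ℝ := 1 / δ + 2 ^ (δ - 1) with hBdef
  clear_value B
  have hB : 0 < B := by rw [hBdef]; positivity
  set A : ℝ := Real.log (2 * c) with hAdef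
  clear_value A
  set q : ℝ := 2 + δ / α with hqdef
  clear_value q
  have hq : 0 < q := by rw [hqdef]; positivity
  set C : ℝ := 2 * B / γ * ab ^ (δ / α) with hCdef
  clear_value C
  have hCpos : 0 < C := by rw [hCdef]; positivity
  have hmaxB : 0 ≤ 2 * (max A 0 + B) / γ := by
    have h0 : (0:ℝ) ≤ max A 0 := le_max_right A 0
    positivity
  set K : ℝ := 1 + Real.sqrt (2 * (max A 0 + B) / γ) + C ^ (1 / q) with hKdef
  clear_value K
  have hsqrtnn : 0 ≤ Real.sqrt (2 * (max A 0 + B) / γ) := Real.sqrt_nonneg _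
  have hCqnn : 0 < C ^ (1 / q) := Real.rpow_pos_of_pos hCpos _
  have hK1 : 1 ≤ K := by rw [hKdef]; linarith
  have hK : 0 < K := by linarith
  have hKsq : max A 0 + B ≤ γ * K ^ 2 / 2 := by
    have h1 : Real.sqrt (2 * (max A 0 + B) / γ) ≤ K := by rw [hKdef]; linarith
    have h2 : 2 * (max A 0 + B) / γ ≤ K ^ 2 := by
      have hss := Real.sq_sqrt hmaxB
      have h3 := pow_le_pow_left₀ hsqrtnn h1 2
      rw [hss] at h3
      exact h3
    rw [div_le_iff₀ hγ] at h2
    linarith [mul_comm (K ^ 2) γ]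
  have hKq : C ≤ K ^ q := by
    have h1 : C ^ (1 / q) ≤ K := by rw [hKdef]; linarith
    calc C = (C ^ (1 / q)) ^ q := by
          rw [← Real.rpow_mul hCpos.le, one_div_mul_cancel hq.ne', Real.rpow_one]
      _ ≤ K ^ q := Real.rpow_le_rpow hCqnn.le h1 hq.le
  refine ⟨K, hK, fun n hn => ?_⟩
  set p : ℝ := δ / (2 * (2 * α + δ)) with hpdef
  have hp : 0 < p := by rw [hpdef]; positivity
  clear_value p
  have hn0 : (0:ℝ) < n := by exact_mod_cast hn
  have hn1 : (1:ℝ) ≤ n := by exact_mod_cast hn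
  have hnp1 : (1:ℝ) ≤ (n:ℝ) ^ p := Real.one_le_rpow hn1 hp.le
  have hrn : K ≤ K * (n:ℝ) ^ p := le_mul_of_one_le_right hK.le hnp1
  set pr := @Measure.map ℝ (Fin n → ℝ → ℝ) _ (mS n) (tparam α n) ν with hprdef
  -- ν is a probability measure
  have hunivν : ν Set.univ = 1 := by
    rw [hν, withDensity_apply _ MeasurableSet.univ, Measure.restrict_univ,
      ← ofReal_integral_eq_lintegral_ofReal ((gprior_integrable δ).div_const c)
        (Eventually.of_forall fun z => div_nonneg (gprior_nonneg δ z) hc.le),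
      integral_div, hcint, div_self hc.ne']
    exact ENNReal.ofReal_one
  have hmapA : ∀ S : Set (Fin n → ℝ → ℝ), pr S ≤ 1 := by
    intro S
    rw [hprdef]
    refine le_trans (measure_mono (subset_univ _)) ?_
    rw [Measure.map_apply_of_aemeasurable ((hmeas n).aemeasurable) MeasurableSet.univ,
      preimage_univ, hunivν]
  clear_value pr
  unfold etaS
  refine csInf_le ⟨0, fun r hr => hr.1⟩ ⟨by positivity, fun r' hr' => ?_⟩
  have hKr' : K ≤ r' := le_trans hrn hr'
  have hr1 : 1 ≤ r' := le_trans hK1 hKr'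
  have hr0 : 0 < r' := by linarith
  set m := Real.sqrt n with hmdef
  have hm0 : 0 < m := by rw [hmdef]; exact Real.sqrt_pos.2 hn0
  set s := r' / (ab * m) with hsdef
  have hs : 0 < s := by rw [hsdef]; positivity
  clear_value s
  set ρ := min 1 (s ^ (1 / α)) with hρdef
  have hρ0 : 0 < ρ := by rw [hρdef]; exact lt_min one_pos (Real.rpow_pos_of_pos hs _)
  have hρ1 : ρ ≤ 1 := by rw [hρdef]; exact min_le_left _ _
  have hρle : ρ ≤ s ^ (1 / α) := by rw [hρdef]; exact min_le_right _ _
  have hρcase : ρ = 1 ∨ ρ = s ^ (1 / α) := by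
    rw [hρdef]
    rcases le_total (1 : ℝ) (s ^ (1 / α)) with h | h
    · exact Or.inl (min_eq_left h)
    · exact Or.inr (min_eq_right h)
  clear_value ρ
  have hρs : ρ ^ α ≤ s := by
    calc ρ ^ α ≤ (s ^ (1 / α)) ^ α :=
          Real.rpow_le_rpow hρ0.le hρle hα0.le
      _ = s := by rw [← Real.rpow_mul hs.le, one_div_mul_cancel hα0.ne', Real.rpow_one]
  set E : ℝ := 2 ^ (δ - 1) / ρ ^ δ with hEdef
  have hE0 : 0 < E := by rw [hEdef]; positivity
  clear_value E
  -- lower bound for pr of the small ball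
  have hsub : Icc (ρ / 2) ρ ⊆ (tparam α n) ⁻¹'
      {u | u ∈ tparam α n '' Icc (-1 : ℝ) 1 ∧
        bH (fun _ : Fin n => (volume : Measure ℝ)) (tparam α n 0) u ≤ r'} := by
    intro θ hθ
    obtain ⟨hθ1, hθ2⟩ := hθ
    have hθ0 : 0 < θ := lt_of_lt_of_le (by linarith) hθ1
    have hθI : θ ∈ Icc (-1 : ℝ) 1 := ⟨by linarith, le_trans hθ2 hρ1⟩
    simp only [Set.mem_preimage, Set.mem_setOf_eq]
    refine ⟨mem_image_of_mem _ hθI, ?_⟩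
    have h0I : (0:ℝ) ∈ Icc (-1 : ℝ) 1 := ⟨by norm_num, by norm_num⟩
    have hcomp2 := (hcomp 0 h0I θ hθI).2
    rw [zero_sub, abs_neg, abs_of_nonneg hθ0.le] at hcomp2
    rw [show tparam α n 0 = (fun _ : Fin n => tθgam α 0) from rfl,
      show tparam α n θ = (fun _ : Fin n => tθgam α θ) from rfl, bH_const, ← hmdef]
    have hθρ : θ ^ α ≤ ρ ^ α := Real.rpow_le_rpow hθ0.le hθ2 hα0.le
    calc m * hD volume (tθgam α 0) (tθgam α θ)
        ≤ m * (ab * θ ^ α) :=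
          mul_le_mul_of_nonneg_left hcomp2 hm0.le
      _ ≤ m * (ab * s) := by
          have h6 : θ ^ α ≤ s := le_trans hθρ hρs
          exact mul_le_mul_of_nonneg_left (mul_le_mul_of_nonneg_left h6 hab0.le) hm0.le
      _ = r' := by rw [hsdef]; field_simp
  have hνIcc : ENNReal.ofReal (ρ / 2 * Real.exp (-E) / c) ≤ ν (Icc (ρ / 2) ρ) := by
    rw [hν, withDensity_apply _ measurableSet_Icc,
      ← ofReal_integral_eq_lintegral_ofReal
        (((gprior_integrable δ).div_const c).integrableOn)
        (Eventually.of_forall fun z => div_nonneg (gprior_nonneg δ z) hc.le)]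
    apply ENNReal.ofReal_le_ofReal
    rw [integral_div]
    have h7 := gprior_setIntegral_lb hδ hρ0 hρ1
    rw [← hEdef] at h7
    exact (div_le_div_iff_of_pos_right hc).2 h7
  have hmapB : ENNReal.ofReal (ρ / 2 * Real.exp (-E) / c) ≤
      pr {u | u ∈ tparam α n '' Icc (-1 : ℝ) 1 ∧
        bH (fun _ : Fin n => (volume : Measure ℝ)) (tparam α n 0) u ≤ r'} := by
    refine le_trans hνIcc (le_trans (measure_mono hsub) ?_)
    rw [hprdef]
    exact Measure.le_map_apply ((hmeas n).aemeasurable) _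
  -- the key real inequality
  have hρinv : ρ ^ (-δ) ≤ 1 + (ab * m) ^ (δ / α) / r' ^ (δ / α) := by
    have hterm : 0 ≤ (ab * m) ^ (δ / α) / r' ^ (δ / α) := by positivity
    rcases hρcase with h | h
    · rw [h, Real.one_rpow]; linarith
    · rw [h, ← Real.rpow_mul hs.le,
        show 1 / α * (-δ) = -(δ / α) by ring, Real.rpow_neg hs.le,
        hsdef, Real.div_rpow hr0.le (by positivity), inv_div]
      linarith
  have hlog : Real.log (2 * c / ρ) + E ≤ γ * r' ^ 2 := by
    set X := ρ ^ (-δ) with hXdef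
    set T := (ab * m) ^ (δ / α) / r' ^ (δ / α) with hTdef
    have hX0 : 0 < X := by rw [hXdef]; positivity
    clear_value X T
    have h1 : Real.log (2 * c / ρ) = A + Real.log ρ⁻¹ := by
      rw [Real.log_div (by positivity) hρ0.ne', Real.log_inv, hAdef]; ring
    have h2 : δ * Real.log ρ⁻¹ ≤ X := by
      have hlr : Real.log X = -δ * Real.log ρ := by
        rw [hXdef]; rw [Real.log_rpow hρ0]
      have hle : Real.log X ≤ X - 1 := Real.log_le_sub_one_of_pos hX0
      rw [Real.log_inv]
      linarith [hlr, hle]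
    have h2c : Real.log ρ⁻¹ ≤ X / δ := by
      rw [le_div_iff₀ hδ]; linarith
    have hEval : E = 2 ^ (δ - 1) * X := by
      rw [hEdef, hXdef, Real.rpow_neg hρ0.le, div_eq_mul_inv]
    have hBX : B * X = X / δ + 2 ^ (δ - 1) * X := by rw [hBdef]; ring
    have hmono : B * X ≤ B * (1 + T) := mul_le_mul_of_nonneg_left hρinv hB.le
    have hBT : B * (1 + T) = B + B * T := by ring
    have part1 : A + B ≤ γ * r' ^ 2 / 2 := by
      have hA : A ≤ max A 0 := le_max_left A 0
      have hK2 : K ^ 2 ≤ r' ^ 2 := pow_le_pow_left₀ hK.le hKr' 2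
      have hγK : γ * K ^ 2 ≤ γ * r' ^ 2 := mul_le_mul_of_nonneg_left hK2 hγ.le
      linarith [hKsq, hA, hγK]
    have part2 : B * T ≤ γ * r' ^ 2 / 2 := by
      have hrpow : 0 < r' ^ (δ / α) := Real.rpow_pos_of_pos hr0 _
      have hq2 : r' ^ q = r' ^ 2 * r' ^ (δ / α) := by
        rw [hqdef, Real.rpow_add hr0, Real.rpow_two]
      have hmn : m ^ (δ / α) = (n:ℝ) ^ (δ / (2 * α)) := by
        rw [hmdef, Real.sqrt_eq_rpow, ← Real.rpow_mul (Nat.cast_nonneg n),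
          show 1 / 2 * (δ / α) = δ / (2 * α) by ring]
      have habm : (ab * m) ^ (δ / α) = ab ^ (δ / α) * (n:ℝ) ^ (δ / (2 * α)) := by
        rw [Real.mul_rpow hab0.le hm0.le, hmn]
      have hrq : C * (n:ℝ) ^ (δ / (2 * α)) ≤ r' ^ q := by
        calc C * (n:ℝ) ^ (δ / (2 * α))
            ≤ K ^ q * (n:ℝ) ^ (δ / (2 * α)) :=
              mul_le_mul_of_nonneg_right hKq (Real.rpow_nonneg (Nat.cast_nonneg n) _)
          _ = (K * (n:ℝ) ^ p) ^ q := by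
              rw [Real.mul_rpow hK.le (Real.rpow_nonneg (Nat.cast_nonneg n) _),
                ← Real.rpow_mul (Nat.cast_nonneg n)]
              congr 2
              rw [hpdef, hqdef]
              field_simp
          _ ≤ r' ^ q := Real.rpow_le_rpow (by positivity) hr' hq.le
      rw [hTdef, ← mul_div_assoc, div_le_iff₀ hrpow, habm]
      have hfin := mul_le_mul_of_nonneg_left hrq (by positivity : (0:ℝ) ≤ γ / 2)
      calc B * (ab ^ (δ / α) * (n:ℝ) ^ (δ / (2 * α)))
          = γ / 2 * (C * (n:ℝ) ^ (δ / (2 * α))) := by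
            rw [hCdef]; field_simp
        _ ≤ γ / 2 * r' ^ q := hfin
        _ = γ * r' ^ 2 / 2 * r' ^ (δ / α) := by rw [hq2]; ring
    linarith
  have hexpE : 1 ≤ Real.exp (γ * r' ^ 2) * (ρ / 2 * Real.exp (-E) / c) := by
    have hgoal : 2 * c / ρ ≤ Real.exp (γ * r' ^ 2 - E) := by
      rw [← Real.exp_log (show (0:ℝ) < 2 * c / ρ by positivity)]
      exact Real.exp_le_exp.2 (by linarith)
    rw [Real.exp_sub] at hgoal
    have h5 : 2 * c ≤ Real.exp (γ * r' ^ 2) / Real.exp E * ρ := (div_le_iff₀ hρ0).1 hgoal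
    have heq : Real.exp (γ * r' ^ 2) * (ρ / 2 * Real.exp (-E) / c) =
        Real.exp (γ * r' ^ 2) / Real.exp E * ρ / (2 * c) := by
      rw [Real.exp_neg]
      field_simp
    rw [heq, le_div_iff₀ (by positivity)]
    linarith
  have hC1 : (1:ℝ≥0∞) ≤ ENNReal.ofReal (Real.exp (γ * r' ^ 2)) *
      ENNReal.ofReal (ρ / 2 * Real.exp (-E) / c) := by
    rw [← ENNReal.ofReal_mul (Real.exp_nonneg _)]
    exact ENNReal.one_le_ofReal.2 hexpE
  exact le_trans (le_trans (hmapA _) hC1) (mul_le_mul_right hmapB _)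

end
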